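/- arXiv:2405.16267 — 2 statements merged into one kernel-verified Lean document; each statement's English description precedes it below -/
import Mathlib

section
/- For any vector x ∈ ℝⁿ and integer κ with 0 ≤ κ ≤ n, if there exist s ∈ ℝⁿ and t ∈ ℝ with xᵀs = t, ‖x‖₁ ≤ t, ‖s‖₁ ≤ κ, and ‖s‖∞ ≤ 1, then ‖x‖₀ ≤ κ. -/
/-- ℓ0 "norm": number of nonzero entries. -/
noncomputable def l0 {n : ℕ} (x : Fin n → ℝ) : ℕ := (Finset.univ.filter fun i => x i ≠ 0).card

theorem stmt_1 (n κ : ℕ) (hκ : κ ≤ n) (x : Fin n → ℝ)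
    (h : ∃ (s : Fin n → ℝ) (t : ℝ),
      (∑ i, x i * s i) = t ∧
      (∑ i, |x i|) ≤ t ∧
      (∑ i, |s i|) ≤ (κ : ℝ) ∧
      (∀ i, |s i| ≤ 1)) :
    l0 x ≤ κ := by
  obtain ⟨s, t, hts, h1, hsk, hsi⟩ := h
  -- pointwise: x i * s i ≤ |x i|
  have hpw : ∀ i : Fin n, x i * s i ≤ |x i| := by
    intro i
    calc x i * s i ≤ |x i * s i| := le_abs_self _
      _ = |x i| * |s i| := abs_mul _ _
      _ ≤ |x i| * 1 := by
          exact mul_le_mul_of_nonneg_left (hsi i) (abs_nonneg _)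
      _ = |x i| := mul_one _
  -- equality forced
  have heq : ∀ i : Fin n, x i * s i = |x i| := by
    have hsum : (∑ i, |x i|) ≤ ∑ i, x i * s i := hts ▸ h1
    have hle : (∑ i, x i * s i) ≤ ∑ i, |x i| := Finset.sum_le_sum fun i _ => hpw i
    have hall := (Finset.sum_eq_sum_iff_of_le (fun i (_ : i ∈ Finset.univ) => hpw i)).mp
      (le_antisymm hle hsum)
    intro i; exact hall i (Finset.mem_univ i)
  -- for nonzero x i, |s i| = 1
  have hs1 : ∀ i : Fin n, x i ≠ 0 → 1 ≤ |s i| := by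
    intro i hxi
    have hx : 0 < |x i| := abs_pos.mpr hxi
    have : |x i| ≤ |x i| * |s i| := by
      calc |x i| = x i * s i := (heq i).symm
        _ ≤ |x i * s i| := le_abs_self _
        _ = |x i| * |s i| := abs_mul _ _
    nlinarith
  -- count
  have hcard : (l0 x : ℝ) ≤ ∑ i, |s i| := by
    unfold l0
    rw [← Finset.sum_boole]
    apply Finset.sum_le_sum
    intro i _
    by_cases hxi : x i ≠ 0
    · simp [hxi, hs1 i hxi]
    · simp only [hxi, if_false]
      positivity
  have : (l0 x : ℝ) ≤ (κ : ℝ) := hcard.trans hsk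
  exact_mod_cast this
end

section
/- Let ℓᵢ be convex functions, and consider the sparse consensus problem: minimize Σᵢ₌₁^N [ℓᵢ(Aᵢxᵢ − bᵢ) + (1/(2Nγ))‖xᵢ‖₂²] subject to xᵢ = z for all i, zᵀs = t, ‖z‖₁ ≤ t, ‖s‖₁ ≤ κ, ‖s‖∞ ≤ 1. Then (x, z, s, t) is optimal for this problem if and only if z = x₁ = ⋯ = x_N = x* where x* is optimal for the original problem: minimize Σᵢ ℓᵢ(Aᵢx − bᵢ) + (1/(2γ))‖x‖₂² subject to ‖x‖₀ ≤ κ; moreover the two optimal values coincide. -/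
open Matrix

lemma feas_l0 {n κ : ℕ} (z s : Fin n → ℝ) (t : ℝ)
    (h1 : (∑ j, z j * s j) = t) (h2 : (∑ j, |z j|) ≤ t)
    (h3 : (∑ j, |s j|) ≤ (κ : ℝ)) (h4 : ∀ j, |s j| ≤ 1) : l0 z ≤ κ := by
  have term : ∀ j, z j ≠ 0 → |s j| = 1 := by
    have hsum : ∑ j, (|z j| - z j * s j) ≤ 0 := by
      rw [Finset.sum_sub_distrib, h1]; linarith
    have hnn : ∀ j ∈ Finset.univ, (0:ℝ) ≤ |z j| - z j * s j := by
      intro j _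
      have : z j * s j ≤ |z j| := by
        calc z j * s j ≤ |z j * s j| := le_abs_self _
          _ = |z j| * |s j| := abs_mul _ _
          _ ≤ |z j| * 1 := mul_le_mul_of_nonneg_left (h4 j) (abs_nonneg _)
          _ = |z j| := mul_one _
      linarith
    have heq : ∑ j, (|z j| - z j * s j) = 0 :=
      le_antisymm hsum (Finset.sum_nonneg hnn)
    have hz := (Finset.sum_eq_zero_iff_of_nonneg hnn).1 heq
    intro j hj
    have h0 : |z j| - z j * s j = 0 := hz j (Finset.mem_univ j)
    have habs : |z j| ≠ 0 := abs_ne_zero.2 hj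
    have hthis : z j * s j = |z j| := by linarith
    have hm : |z j| * |s j| = |z j| * 1 := by
      rw [← abs_mul, hthis, abs_abs, mul_one]
    exact mul_left_cancel₀ habs hm
  have : (l0 z : ℝ) ≤ ∑ j, |s j| := by
    unfold l0
    rw [← Finset.sum_boole]
    apply Finset.sum_le_sum
    intro j _
    by_cases hj : z j ≠ 0
    · simp [hj, term j hj]
    · simp [hj]
  exact_mod_cast this.trans h3

lemma l0_feas {n κ : ℕ} (y : Fin n → ℝ) (hy : l0 y ≤ κ) :
    ∃ s' : Fin n → ℝ, (∑ j, y j * s' j) = (∑ j, |y j|) ∧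
      (∑ j, |s' j|) ≤ (κ : ℝ) ∧ (∀ j, |s' j| ≤ 1) := by
  refine ⟨fun j => Real.sign (y j), ?_, ?_, ?_⟩
  · apply Finset.sum_congr rfl
    intro j _
    show y j * Real.sign (y j) = |y j|
    rcases lt_trichotomy (y j) 0 with h | h | h
    · rw [Real.sign_of_neg h, abs_of_neg h]; ring
    · simp [h]
    · rw [Real.sign_of_pos h, abs_of_pos h]; ring
  · have key : ∑ j, |Real.sign (y j)| = ((Finset.univ.filter fun j => y j ≠ 0).card : ℝ) := by
      rw [← Finset.sum_boole]
      apply Finset.sum_congr rfl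
      intro j _
      rcases lt_trichotomy (y j) 0 with h | h | h
      · rw [Real.sign_of_neg h]; simp [h.ne]
      · simp [h]
      · rw [Real.sign_of_pos h]; simp [h.ne']
    show ∑ j, |Real.sign (y j)| ≤ (κ:ℝ)
    rw [key]
    exact_mod_cast hy
  · intro j
    show |Real.sign (y j)| ≤ 1
    rcases lt_trichotomy (y j) 0 with h | h | h
    · rw [Real.sign_of_neg h]; norm_num
    · simp [h]
    · rw [Real.sign_of_pos h]; norm_num

section

variable (N n : ℕ) (κ : ℕ) (m : Fin N → ℕ)
  (ℓ : ∀ i, (Fin (m i) → ℝ) → ℝ)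
  (A : ∀ i, Matrix (Fin (m i)) (Fin n) ℝ) (b : ∀ i, Fin (m i) → ℝ) (γ : ℝ)

/-- Objective of the original sparse problem. -/
noncomputable def origObj (z : Fin n → ℝ) : ℝ :=
  (∑ i, ℓ i ((A i).mulVec z - b i)) + 1 / (2 * γ) * ∑ j, (z j) ^ 2

/-- Optimality for the original sparse problem: feasible (`‖z‖₀ ≤ κ`) and minimizing. -/
def origOpt (z : Fin n → ℝ) : Prop :=
  l0 z ≤ κ ∧ ∀ y : Fin n → ℝ, l0 y ≤ κ →
    origObj N n m ℓ A b γ z ≤ origObj N n m ℓ A b γ y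

/-- Objective of the consensus reformulation. -/
noncomputable def consObj (x : ∀ _ : Fin N, Fin n → ℝ) : ℝ :=
  ∑ i, (ℓ i ((A i).mulVec (x i) - b i) + 1 / (2 * N * γ) * ∑ j, (x i j) ^ 2)

/-- Feasibility for the bilinear consensus reformulation. -/
def consFeas (x : ∀ _ : Fin N, Fin n → ℝ) (z s : Fin n → ℝ) (t : ℝ) : Prop :=
  (∀ i, x i = z) ∧ (∑ j, z j * s j) = t ∧ (∑ j, |z j|) ≤ t ∧
    (∑ j, |s j|) ≤ (κ : ℝ) ∧ (∀ j, |s j| ≤ 1)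

/-- Optimality for the bilinear consensus reformulation. -/
def consOpt (x : ∀ _ : Fin N, Fin n → ℝ) (z s : Fin n → ℝ) (t : ℝ) : Prop :=
  consFeas N n κ x z s t ∧
    ∀ (x' : ∀ _ : Fin N, Fin n → ℝ) (z' s' : Fin n → ℝ) (t' : ℝ),
      consFeas N n κ x' z' s' t' →
        consObj N n m ℓ A b γ x ≤ consObj N n m ℓ A b γ x'

end

lemma obj_eq (N n : ℕ) (hN : 0 < N) (m : Fin N → ℕ)
    (ℓ : ∀ i, (Fin (m i) → ℝ) → ℝ)
    (A : ∀ i, Matrix (Fin (m i)) (Fin n) ℝ) (b : ∀ i, Fin (m i) → ℝ)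
    (γ : ℝ) (hγ : 0 < γ)
    (x : ∀ _ : Fin N, Fin n → ℝ) (z : Fin n → ℝ) (hx : ∀ i, x i = z) :
    consObj N n m ℓ A b γ x = origObj N n m ℓ A b γ z := by
  unfold consObj origObj
  have : ∑ i, (ℓ i ((A i).mulVec (x i) - b i) + 1 / (2 * N * γ) * ∑ j, (x i j) ^ 2)
      = ∑ i, (ℓ i ((A i).mulVec z - b i) + 1 / (2 * N * γ) * ∑ j, (z j) ^ 2) := by
    apply Finset.sum_congr rfl; intro i _; rw [hx i]
  rw [this, Finset.sum_add_distrib, Finset.sum_const, Finset.card_univ, Fintype.card_fin]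
  have hNne : (N:ℝ) ≠ 0 := Nat.cast_ne_zero.2 hN.ne'
  have hγne : γ ≠ 0 := hγ.ne'
  congr 1
  rw [nsmul_eq_mul]
  field_simp

theorem stmt_12 (N n κ : ℕ) (hN : 0 < N) (hκ : κ ≤ n) (m : Fin N → ℕ)
    (ℓ : ∀ i, (Fin (m i) → ℝ) → ℝ)
    (hℓconv : ∀ i, ConvexOn ℝ Set.univ (ℓ i))
    (A : ∀ i, Matrix (Fin (m i)) (Fin n) ℝ) (b : ∀ i, Fin (m i) → ℝ)
    (γ : ℝ) (hγ : 0 < γ)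
    (x : ∀ _ : Fin N, Fin n → ℝ) (z s : Fin n → ℝ) (t : ℝ) :
    (consOpt N n κ m ℓ A b γ x z s t ↔
      consFeas N n κ x z s t ∧ (∀ i, x i = z) ∧ origOpt N n κ m ℓ A b γ z) ∧
    (consOpt N n κ m ℓ A b γ x z s t →
      consObj N n m ℓ A b γ x = origObj N n m ℓ A b γ z) := by
  constructor
  · constructor
    · rintro ⟨hfeas, hmin⟩
      refine ⟨hfeas, hfeas.1, ?_, ?_⟩
      · exact feas_l0 z s t hfeas.2.1 hfeas.2.2.1 hfeas.2.2.2.1 hfeas.2.2.2.2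
      · intro y hy
        obtain ⟨s', hs1, hs2, hs3⟩ := l0_feas y hy
        have hfy : consFeas N n κ (fun _ => y) y s' (∑ j, |y j|) :=
          ⟨fun _ => rfl, hs1, le_refl _, hs2, hs3⟩
        have := hmin (fun _ => y) y s' (∑ j, |y j|) hfy
        rw [obj_eq N n hN m ℓ A b γ hγ x z hfeas.1,
            obj_eq N n hN m ℓ A b γ hγ (fun _ => y) y (fun _ => rfl)] at this
        exact this
    · rintro ⟨hfeas, hxz, hl0, hmin⟩
      refine ⟨hfeas, ?_⟩
      intro x' z' s' t' hf'
      have hl0' := feas_l0 z' s' t' hf'.2.1 hf'.2.2.1 hf'.2.2.2.1 hf'.2.2.2.2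
      rw [obj_eq N n hN m ℓ A b γ hγ x z hxz,
          obj_eq N n hN m ℓ A b γ hγ x' z' hf'.1]
      exact hmin z' hl0'
  · intro hopt
    exact obj_eq N n hN m ℓ A b γ hγ x z hopt.1.1
end
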